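/- Let n ≥ 1 be an integer, A : (0,∞) → ℝ continuous nonnegative, f(s) = ∫₀ˢ A(u) du, and suppose s ↦ f(s)/sⁿ is non-decreasing with finite limit L as s → ∞. Define H(τ) = ∫₀^∞ (4πτ)^{-n/2} e^{-s²/(4τ)} A(s) ds, and let ω_n = π^{n/2}/Γ(n/2+1). Then lim_{τ→∞} H(τ) exists and lim_{τ→∞} ∫₀^∞ (4πτ)^{-n/2} e^{-s²/(4τ)} A(s) ds = (1/ω_n) lim_{r→∞} f(r)/rⁿ = L/ω_n. -/

import Mathlib

open Real Set MeasureTheory Filter intervalIntegral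

set_option maxHeartbeats 2000000 in
theorem huisken_limit_eq_avr (n : ℕ) (hn : 1 ≤ n)
    (A : ℝ → ℝ)
    (hAcont : ContinuousOn A (Set.Ioi 0))
    (hAnonneg : ∀ s ∈ Set.Ioi (0:ℝ), 0 ≤ A s)
    (f : ℝ → ℝ)
    (hf : ∀ s, f s = ∫ u in (0:ℝ)..s, A u)
    (hmono : MonotoneOn (fun s => f s / s ^ n) (Set.Ioi 0))
    (L : ℝ)
    (hL : Tendsto (fun r => f r / r ^ n) atTop (nhds L))
    (H : ℝ → ℝ)
    (hH : ∀ τ : ℝ, 0 < τ →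
      H τ = ∫ s in Set.Ioi (0:ℝ), (4 * π * τ) ^ (-(n:ℝ)/2) * Real.exp (-s^2 / (4*τ)) * A s)
    (hint : ∀ τ : ℝ, 0 < τ → IntegrableOn
      (fun s => (4 * π * τ) ^ (-(n:ℝ)/2) * Real.exp (-s^2 / (4*τ)) * A s) (Set.Ioi 0)) :
    Tendsto H atTop (nhds (L / (π ^ ((n:ℝ)/2) / Real.Gamma ((n:ℝ)/2 + 1)))) := by
  have hπ : (0:ℝ) < π := Real.pi_pos
  -- A is integrable on (0, b] for every b > 0
  have hbase : IntegrableOn (fun s => Real.exp (-s^2 / (4*1)) * A s) (Set.Ioi 0) := by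
    have hc : (0:ℝ) < (4*π*1) ^ (-(n:ℝ)/2) := Real.rpow_pos_of_pos (by positivity) _
    have h1 := ((hint 1 one_pos).const_mul (((4*π*1) ^ (-(n:ℝ)/2))⁻¹))
    refine h1.congr (Filter.Eventually.of_forall fun s => ?_)
    show ((4*π*1) ^ (-(n:ℝ)/2))⁻¹ * ((4*π*1) ^ (-(n:ℝ)/2) * Real.exp (-s^2 / (4*1)) * A s) = _
    rw [← mul_assoc, ← mul_assoc, inv_mul_cancel₀ hc.ne', one_mul]
  have hAi : ∀ b : ℝ, 0 < b → IntegrableOn A (Set.Ioc 0 b) := by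
    intro b hb
    have hEA : IntegrableOn (fun s => Real.exp (-s^2 / (4*1)) * A s) (Set.Ioc 0 b) :=
      hbase.mono_set Ioc_subset_Ioi_self
    refine Integrable.mono' (hEA.const_mul (Real.exp (b^2/(4*1)))) ?_ ?_
    · exact ((hAcont.mono Ioc_subset_Ioi_self).aestronglyMeasurable measurableSet_Ioc)
    · filter_upwards [ae_restrict_mem measurableSet_Ioc] with s hs
      have hs0 : 0 < s := hs.1
      have hsb : s ≤ b := hs.2
      have hA0 : 0 ≤ A s := hAnonneg s hs0
      rw [Real.norm_eq_abs, abs_of_nonneg hA0, ← mul_assoc, ← Real.exp_add]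
      have h1 : (1:ℝ) ≤ Real.exp (b^2/(4*1) + -s^2/(4*1)) := by
        rw [Real.one_le_exp_iff]
        nlinarith
      nlinarith [Real.exp_pos (b^2/(4*1) + -s^2/(4*1))]
  -- basic facts about f
  have hf_Ioc : ∀ s : ℝ, 0 ≤ s → f s = ∫ u in Set.Ioc (0:ℝ) s, A u := by
    intro s hs
    rw [hf s, intervalIntegral.integral_of_le hs]
  have hf0 : ∀ s : ℝ, 0 ≤ s → 0 ≤ f s := by
    intro s hs
    rw [hf_Ioc s hs]
    exact setIntegral_nonneg measurableSet_Ioc (fun u hu => hAnonneg u hu.1)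
  have hgL : ∀ s : ℝ, 0 < s → f s / s ^ n ≤ L := by
    intro s hs
    refine ge_of_tendsto hL ?_
    filter_upwards [eventually_ge_atTop s] with t ht
    exact hmono hs (hs.trans_le ht) ht
  have hfsL : ∀ s : ℝ, 0 < s → f s ≤ L * s ^ n := by
    intro s hs
    have := hgL s hs
    rw [div_le_iff₀ (pow_pos hs n)] at this
    linarith [this]
  have hL0 : 0 ≤ L := by
    refine ge_of_tendsto hL ?_
    filter_upwards [eventually_gt_atTop (0:ℝ)] with t ht
    exact div_nonneg (hf0 t ht.le) (pow_nonneg ht.le n)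
  -- FTC : f' = A on (0,∞)
  have hderiv : ∀ s ∈ Set.Ioi (0:ℝ), HasDerivAt f (A s) s := by
    intro s hs
    have hs0 : (0:ℝ) < s := hs
    have hii : IntervalIntegrable A volume 0 s := by
      rw [intervalIntegrable_iff_integrableOn_Ioc_of_le hs0.le]
      exact hAi s hs0
    have hmeas : StronglyMeasurableAtFilter A (nhds s) volume :=
      ⟨Set.Ioi 0, Ioi_mem_nhds hs0, hAcont.aestronglyMeasurable measurableSet_Ioi⟩
    have hca : ContinuousAt A s := hAcont.continuousAt (Ioi_mem_nhds hs0)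
    have h := intervalIntegral.integral_hasDerivAt_right hii hmeas hca
    have hfe : f = fun u => ∫ x in (0:ℝ)..u, A x := funext hf
    rw [hfe]
    exact h
  have hf_contOn : ContinuousOn f (Set.Ioi 0) := fun s hs =>
    (hderiv s hs).continuousAt.continuousWithinAt
  -- integrability of the two integrands, for each fixed τ > 0
  have hI1 : ∀ τ : ℝ, 0 < τ →
      IntegrableOn (fun s => Real.exp (-s^2/(4*τ)) * A s) (Set.Ioi 0) := by
    intro τ hτ
    have hc : (0:ℝ) < (4*π*τ) ^ (-(n:ℝ)/2) := Real.rpow_pos_of_pos (by positivity) _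
    have h1 := ((hint τ hτ).const_mul (((4*π*τ) ^ (-(n:ℝ)/2))⁻¹))
    refine h1.congr (Filter.Eventually.of_forall fun s => ?_)
    show ((4*π*τ) ^ (-(n:ℝ)/2))⁻¹ * ((4*π*τ) ^ (-(n:ℝ)/2) * Real.exp (-s^2 / (4*τ)) * A s) = _
    rw [← mul_assoc, ← mul_assoc, inv_mul_cancel₀ hc.ne', one_mul]
  have hI2 : ∀ τ : ℝ, 0 < τ →
      IntegrableOn (fun s => s/(2*τ) * Real.exp (-s^2/(4*τ)) * f s) (Set.Ioi 0) := by
    intro τ hτ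
    have hn1 : (-1:ℝ) < (n:ℝ)+1 := by
      have := Nat.cast_nonneg (α := ℝ) n; linarith
    have hbnd : IntegrableOn
        (fun s : ℝ => (L/(2*τ)) * (s ^ ((n:ℝ)+1) * Real.exp (-(1/(4*τ)) * s^2)))
        (Set.Ioi 0) :=
      (integrableOn_rpow_mul_exp_neg_mul_sq (by positivity) hn1).const_mul _
    refine Integrable.mono' hbnd ?_ ?_
    · have hcont : ContinuousOn (fun s => s/(2*τ) * Real.exp (-s^2/(4*τ)) * f s)
          (Set.Ioi 0) := by
        refine ContinuousOn.mul (ContinuousOn.mul ?_ ?_) hf_contOn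
        · exact (continuous_id.div_const _).continuousOn
        · exact (Real.continuous_exp.comp ((continuous_pow 2).neg.div_const _)).continuousOn
      exact hcont.aestronglyMeasurable measurableSet_Ioi
    · filter_upwards [ae_restrict_mem measurableSet_Ioi] with s hs
      have hs0 : 0 < s := hs
      have hfsL' := hfsL s hs0
      have hf0' := hf0 s hs0.le
      have hE := Real.exp_pos (-s^2/(4*τ))
      have hrw : s ^ ((n:ℝ)+1) = s^(n+1) := by
        rw [← Real.rpow_natCast s (n+1)]; push_cast; ring_nf
      have hexp : (-(1/(4*τ)) * s^2) = (-s^2/(4*τ)) := by ring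
      rw [Real.norm_eq_abs,
        abs_of_nonneg (mul_nonneg (mul_nonneg (by positivity) hE.le) hf0'), hrw, hexp]
      calc s/(2*τ) * Real.exp (-s^2/(4*τ)) * f s
          ≤ s/(2*τ) * Real.exp (-s^2/(4*τ)) * (L * s^n) := by
            exact mul_le_mul_of_nonneg_left hfsL' (by positivity)
        _ = L/(2*τ) * (s^(n+1) * Real.exp (-s^2/(4*τ))) := by ring
  -- exhaustion of (0,∞) by the sets Ioc (k+1)⁻¹ (k+1)
  have hSmono : Monotone (fun k : ℕ => Set.Ioc ((((k:ℝ)+1))⁻¹) ((k:ℝ)+1)) := by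
    intro i j hij
    have hij' : (i:ℝ) ≤ (j:ℝ) := Nat.cast_le.mpr hij
    exact Set.Ioc_subset_Ioc (by
      apply inv_anti₀ (by positivity); linarith) (by linarith)
  have hUnion : (⋃ k : ℕ, Set.Ioc ((((k:ℝ)+1))⁻¹) ((k:ℝ)+1)) = Set.Ioi (0:ℝ) := by
    ext x
    simp only [Set.mem_iUnion, Set.mem_Ioc, Set.mem_Ioi]
    constructor
    · rintro ⟨k, hk1, hk2⟩
      exact lt_trans (by positivity) hk1
    · intro hx
      obtain ⟨k, hk⟩ := exists_nat_gt (max x⁻¹ x)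
      have hxk : x⁻¹ < (k:ℝ) + 1 := ((le_max_left _ _).trans_lt hk).trans (lt_add_one _)
      have hxk2 : x ≤ (k:ℝ) + 1 := (((le_max_right _ _).trans_lt hk).trans (lt_add_one _)).le
      refine ⟨k, ?_, hxk2⟩
      have h1 : (1:ℝ) < x * ((k:ℝ)+1) := by
        calc (1:ℝ) = x * x⁻¹ := (mul_inv_cancel₀ hx.ne').symm
          _ < x * ((k:ℝ)+1) := by exact mul_lt_mul_of_pos_left hxk hx
      rw [inv_lt_iff_one_lt_mul₀ (by positivity)]
      linarith
  have hInter : (⋂ k : ℕ, Set.Ioc (0:ℝ) ((((k:ℝ)+1))⁻¹)) = ∅ := by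
    ext x
    simp only [Set.mem_iInter, Set.mem_Ioc, Set.mem_empty_iff_false, iff_false, not_forall]
    by_contra hcon
    push_neg at hcon
    have hx : 0 < x := (hcon 0).1
    obtain ⟨k, hk⟩ := exists_nat_gt x⁻¹
    have hxk : x⁻¹ < (k:ℝ) + 1 := hk.trans (lt_add_one _)
    have h2 : x * ((k:ℝ)+1) ≤ 1 := by
      calc x * ((k:ℝ)+1) ≤ (((k:ℝ)+1))⁻¹ * ((k:ℝ)+1) :=
            mul_le_mul_of_nonneg_right (hcon k).2 (by positivity)
        _ = 1 := inv_mul_cancel₀ (by positivity)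
    have h3 : (1:ℝ) < x * ((k:ℝ)+1) := by
      calc (1:ℝ) = x * x⁻¹ := (mul_inv_cancel₀ hx.ne').symm
        _ < x * ((k:ℝ)+1) := mul_lt_mul_of_pos_left hxk hx
    linarith
  -- integration by parts identity
  have key : ∀ τ : ℝ, 0 < τ →
      (∫ s in Set.Ioi (0:ℝ), Real.exp (-s^2/(4*τ)) * A s)
        = ∫ s in Set.Ioi (0:ℝ), s/(2*τ) * Real.exp (-s^2/(4*τ)) * f s := by
    intro τ hτ
    have hab : ∀ k : ℕ, ((((k:ℝ)+1))⁻¹) ≤ ((k:ℝ)+1) := by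
      intro k
      have h1 : (1:ℝ) ≤ (k:ℝ)+1 := by
        have := Nat.cast_nonneg (α := ℝ) k; linarith
      have h2 : ((((k:ℝ)+1))⁻¹) ≤ 1 := by
        have := inv_anti₀ one_pos h1
        simpa using this
      linarith
    have hIBP : ∀ k : ℕ,
        (∫ s in Set.Ioc ((((k:ℝ)+1))⁻¹) ((k:ℝ)+1), Real.exp (-s^2/(4*τ)) * A s)
          = Real.exp (-((k:ℝ)+1)^2/(4*τ)) * f ((k:ℝ)+1)
            - Real.exp (-(((((k:ℝ)+1))⁻¹))^2/(4*τ)) * f ((((k:ℝ)+1))⁻¹)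
            + ∫ s in Set.Ioc ((((k:ℝ)+1))⁻¹) ((k:ℝ)+1),
                s/(2*τ) * Real.exp (-s^2/(4*τ)) * f s := by
      intro k
      have hIcc : Set.uIcc ((((k:ℝ)+1))⁻¹) ((k:ℝ)+1)
          = Set.Icc ((((k:ℝ)+1))⁻¹) ((k:ℝ)+1) := Set.uIcc_of_le (hab k)
      have hsub : Set.Icc ((((k:ℝ)+1))⁻¹) ((k:ℝ)+1) ⊆ Set.Ioi (0:ℝ) := by
        intro x hx
        have : (0:ℝ) < (((k:ℝ)+1))⁻¹ := by positivity
        exact lt_of_lt_of_le this hx.1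
      have hF : ∀ s ∈ Set.uIcc ((((k:ℝ)+1))⁻¹) ((k:ℝ)+1),
          HasDerivAt (fun u => Real.exp (-u^2/(4*τ)) * f u)
            (-(s/(2*τ) * Real.exp (-s^2/(4*τ)) * f s) + Real.exp (-s^2/(4*τ)) * A s) s := by
        intro s hs
        have hs0 : 0 < s := hsub (hIcc ▸ hs)
        have hg : HasDerivAt (fun u : ℝ => -u^2/(4*τ)) (-(2*s)/(4*τ)) s := by
          have := ((hasDerivAt_pow 2 s).neg).div_const (4*τ)
          simpa using this
        have hv : HasDerivAt (fun u : ℝ => Real.exp (-u^2/(4*τ)))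
            (Real.exp (-s^2/(4*τ)) * (-(2*s)/(4*τ))) s := hg.exp
        have hprod := hv.mul (hderiv s hs0)
        exact hprod.congr_deriv (by ring)
      have hcont1 : ContinuousOn (fun s => Real.exp (-s^2/(4*τ)) * A s)
          (Set.uIcc ((((k:ℝ)+1))⁻¹) ((k:ℝ)+1)) := by
        rw [hIcc]
        exact ((Real.continuous_exp.comp ((continuous_pow 2).neg.div_const _)).continuousOn).mul (hAcont.mono hsub)
      have hcont2 : ContinuousOn (fun s => s/(2*τ) * Real.exp (-s^2/(4*τ)) * f s)
          (Set.uIcc ((((k:ℝ)+1))⁻¹) ((k:ℝ)+1)) := by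
        rw [hIcc]
        exact (((continuous_id.div_const _).continuousOn).mul
          ((Real.continuous_exp.comp ((continuous_pow 2).neg.div_const _)).continuousOn)).mul (hf_contOn.mono hsub)
      have hii1 : IntervalIntegrable (fun s => Real.exp (-s^2/(4*τ)) * A s) volume
          ((((k:ℝ)+1))⁻¹) ((k:ℝ)+1) := hcont1.intervalIntegrable
      have hii2 : IntervalIntegrable (fun s => s/(2*τ) * Real.exp (-s^2/(4*τ)) * f s) volume
          ((((k:ℝ)+1))⁻¹) ((k:ℝ)+1) := hcont2.intervalIntegrable
      have hii2n : IntervalIntegrable (fun s => -(s/(2*τ) * Real.exp (-s^2/(4*τ)) * f s))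
          volume ((((k:ℝ)+1))⁻¹) ((k:ℝ)+1) := hii2.neg
      have heq := intervalIntegral.integral_eq_sub_of_hasDerivAt hF (hii2n.add hii1)
      rw [intervalIntegral.integral_add hii2n hii1, intervalIntegral.integral_neg] at heq
      rw [← intervalIntegral.integral_of_le (hab k), ← intervalIntegral.integral_of_le (hab k)]
      linarith [heq]
    -- limits of both sides
    have hT1 : Tendsto
        (fun k : ℕ => ∫ s in Set.Ioc ((((k:ℝ)+1))⁻¹) ((k:ℝ)+1), Real.exp (-s^2/(4*τ)) * A s)
        atTop (nhds (∫ s in Set.Ioi (0:ℝ), Real.exp (-s^2/(4*τ)) * A s)) := by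
      have h := tendsto_setIntegral_of_monotone (μ := volume)
        (f := fun s => Real.exp (-s^2/(4*τ)) * A s)
        (fun k : ℕ => measurableSet_Ioc) hSmono (by rw [hUnion]; exact hI1 τ hτ)
      rwa [hUnion] at h
    have hT2 : Tendsto
        (fun k : ℕ => ∫ s in Set.Ioc ((((k:ℝ)+1))⁻¹) ((k:ℝ)+1),
          s/(2*τ) * Real.exp (-s^2/(4*τ)) * f s)
        atTop (nhds (∫ s in Set.Ioi (0:ℝ), s/(2*τ) * Real.exp (-s^2/(4*τ)) * f s)) := by
      have h := tendsto_setIntegral_of_monotone (μ := volume)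
        (f := fun s => s/(2*τ) * Real.exp (-s^2/(4*τ)) * f s)
        (fun k : ℕ => measurableSet_Ioc) hSmono (by rw [hUnion]; exact hI2 τ hτ)
      rwa [hUnion] at h
    have hmain : Tendsto (fun x : ℝ => x ^ ((n:ℝ)) * Real.exp (-(1/(4*τ)) * x^2))
        atTop (nhds 0) :=
      (rpow_mul_exp_neg_mul_sq_isLittleO_exp_neg (by positivity) _).isBigO.trans_tendsto
        (by
          have h2 : Tendsto (fun x : ℝ => (1/2 : ℝ) * x) atTop atTop :=
            Tendsto.const_mul_atTop (by norm_num) tendsto_id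
          refine (Real.tendsto_exp_neg_atTop_nhds_zero.comp h2).congr fun x => ?_
          simp only [Function.comp_apply, neg_mul])
    have hbtop : Tendsto (fun k : ℕ => (k:ℝ)+1) atTop atTop :=
      tendsto_atTop_add_const_right _ 1 tendsto_natCast_atTop_atTop
    have hT3 : Tendsto (fun k : ℕ => Real.exp (-((k:ℝ)+1)^2/(4*τ)) * f ((k:ℝ)+1))
        atTop (nhds 0) := by
      have hcomp := hmain.comp hbtop
      refine squeeze_zero (fun k => ?_) (fun k => ?_)
        (show Tendsto (fun k : ℕ => L * ((((k:ℝ)+1)) ^ ((n:ℝ))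
          * Real.exp (-(1/(4*τ)) * (((k:ℝ)+1))^2))) atTop (nhds 0) by
          simpa [Function.comp] using hcomp.const_mul L)
      · have hbk : (0:ℝ) < (k:ℝ)+1 := by positivity
        exact mul_nonneg (Real.exp_pos _).le (hf0 _ hbk.le)
      · have hbk : (0:ℝ) < (k:ℝ)+1 := by positivity
        calc Real.exp (-((k:ℝ)+1)^2/(4*τ)) * f ((k:ℝ)+1)
            ≤ Real.exp (-((k:ℝ)+1)^2/(4*τ)) * (L * ((k:ℝ)+1)^n) :=
              mul_le_mul_of_nonneg_left (hfsL _ hbk) (Real.exp_pos _).le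
          _ = L * ((((k:ℝ)+1)) ^ ((n:ℝ)) * Real.exp (-(1/(4*τ)) * (((k:ℝ)+1))^2)) := by
              rw [Real.rpow_natCast,
                show -(1/(4*τ)) * (((k:ℝ)+1))^2 = -((k:ℝ)+1)^2/(4*τ) from by ring]
              ring
    have hfa : Tendsto (fun k : ℕ => f ((((k:ℝ)+1))⁻¹)) atTop (nhds 0) := by
      have h1 : Tendsto (fun k : ℕ => ∫ s in Set.Ioc (0:ℝ) ((((k:ℝ)+1))⁻¹), A s) atTop
          (nhds (∫ s in (⋂ k : ℕ, Set.Ioc (0:ℝ) ((((k:ℝ)+1))⁻¹)), A s)) := by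
        refine tendsto_setIntegral_of_antitone (fun k : ℕ => measurableSet_Ioc) ?_ ?_
        · intro i j hij
          have hij' : (i:ℝ) ≤ (j:ℝ) := Nat.cast_le.mpr hij
          exact Set.Ioc_subset_Ioc le_rfl (inv_anti₀ (by positivity) (by linarith))
        · exact ⟨0, by simpa using hAi 1 one_pos⟩
      rw [hInter] at h1
      simp only [Measure.restrict_empty, integral_zero_measure] at h1
      refine h1.congr fun k => ?_
      exact (hf_Ioc _ (by positivity)).symm
    have hva : Tendsto (fun k : ℕ => Real.exp (-(((((k:ℝ)+1))⁻¹))^2/(4*τ))) atTop (nhds 1) := by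
      have h0 : Tendsto (fun k : ℕ => (((k:ℝ)+1))⁻¹) atTop (nhds 0) := by
        simpa [one_div] using (tendsto_one_div_add_atTop_nhds_zero_nat (𝕜 := ℝ))
      have hc : Continuous (fun x : ℝ => Real.exp (-x^2/(4*τ))) :=
        Real.continuous_exp.comp ((continuous_pow 2).neg.div_const _)
      have hct : Tendsto (fun k : ℕ => Real.exp (-((((k:ℝ)+1))⁻¹)^2/(4*τ))) atTop
          (nhds (Real.exp (-(0:ℝ)^2/(4*τ)))) := (hc.tendsto 0).comp h0
      have h1 : Real.exp (-(0:ℝ)^2/(4*τ)) = 1 := by norm_num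
      exact h1 ▸ hct
    have hT4 : Tendsto (fun k : ℕ =>
        Real.exp (-(((((k:ℝ)+1))⁻¹))^2/(4*τ)) * f ((((k:ℝ)+1))⁻¹)) atTop (nhds 0) := by
      simpa using hva.mul hfa
    have hRHS : Tendsto (fun k : ℕ =>
        Real.exp (-((k:ℝ)+1)^2/(4*τ)) * f ((k:ℝ)+1)
          - Real.exp (-(((((k:ℝ)+1))⁻¹))^2/(4*τ)) * f ((((k:ℝ)+1))⁻¹)
          + ∫ s in Set.Ioc ((((k:ℝ)+1))⁻¹) ((k:ℝ)+1),
              s/(2*τ) * Real.exp (-s^2/(4*τ)) * f s)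
        atTop (nhds (0 - 0 + ∫ s in Set.Ioi (0:ℝ), s/(2*τ) * Real.exp (-s^2/(4*τ)) * f s)) :=
      (hT3.sub hT4).add hT2
    have hfin := tendsto_nhds_unique (hT1.congr (fun k => hIBP k)) hRHS
    simpa using hfin
  -- substitution s = √τ · u
  have hHψ : ∀ τ : ℝ, 1 ≤ τ → H τ =
      ∫ u in Set.Ioi (0:ℝ),
        (4*π) ^ (-(n:ℝ)/2) * (u^(n+1)/2 * Real.exp (-u^2/4)) *
          (f (Real.sqrt τ * u) / (Real.sqrt τ * u)^n) := by
    intro τ hτ1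
    have hτ : (0:ℝ) < τ := lt_of_lt_of_le one_pos hτ1
    obtain ⟨t, ht0, rfl⟩ : ∃ t : ℝ, 0 < t ∧ τ = t^2 :=
      ⟨Real.sqrt τ, Real.sqrt_pos.mpr hτ, (Real.sq_sqrt hτ.le).symm⟩
    have hst : Real.sqrt (t^2) = t := Real.sqrt_sq ht0.le
    rw [hst]
    have hc : (4*π*t^2) ^ (-(n:ℝ)/2) = (4*π) ^ (-(n:ℝ)/2) * (t ^ n)⁻¹ := by
      rw [Real.mul_rpow (by positivity) (by positivity)]
      congr 1
      calc (t^2) ^ (-(n:ℝ)/2) = (t ^ ((2:ℕ):ℝ)) ^ (-(n:ℝ)/2) := by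
            rw [Real.rpow_natCast]
        _ = t ^ (((2:ℕ):ℝ) * (-(n:ℝ)/2)) := (Real.rpow_mul ht0.le _ _).symm
        _ = t ^ (-(n:ℝ)) := by
            congr 1
            push_cast
            ring
        _ = (t ^ n)⁻¹ := by rw [Real.rpow_neg ht0.le, Real.rpow_natCast]
    rw [hH _ hτ]
    have h1 : (∫ s in Set.Ioi (0:ℝ),
        (4*π*t^2) ^ (-(n:ℝ)/2) * Real.exp (-s^2/(4*t^2)) * A s)
        = (4*π*t^2) ^ (-(n:ℝ)/2) * ∫ s in Set.Ioi (0:ℝ), Real.exp (-s^2/(4*t^2)) * A s := by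
      rw [← MeasureTheory.integral_const_mul]
      exact setIntegral_congr_fun measurableSet_Ioi fun s _ => by ring
    rw [h1, key _ hτ]
    have hsub := MeasureTheory.integral_comp_mul_left_Ioi
      (fun s => s/(2*t^2) * Real.exp (-s^2/(4*t^2)) * f s) 0 ht0
    rw [mul_zero, smul_eq_mul] at hsub
    have h2 : (∫ s in Set.Ioi (0:ℝ), s/(2*t^2) * Real.exp (-s^2/(4*t^2)) * f s)
        = t * ∫ u in Set.Ioi (0:ℝ),
            (t*u)/(2*t^2) * Real.exp (-(t*u)^2/(4*t^2)) * f (t*u) := by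
      rw [hsub, ← mul_assoc, mul_inv_cancel₀ ht0.ne', one_mul]
    rw [h2, ← mul_assoc, ← MeasureTheory.integral_const_mul]
    refine setIntegral_congr_fun measurableSet_Ioi fun u hu => ?_
    have hu0 : 0 < u := hu
    have hexp : -(t*u)^2/(4*t^2) = -u^2/4 := by
      field_simp
    rw [hc, hexp, mul_pow]
    have htn : (t:ℝ) ^ n ≠ 0 := (pow_pos ht0 n).ne'
    have hun : (u:ℝ) ^ n ≠ 0 := (pow_pos hu0 n).ne'
    field_simp
    ring
  -- dominated convergence
  have hDCT : Tendsto (fun τ : ℝ => ∫ u in Set.Ioi (0:ℝ),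
      (4*π) ^ (-(n:ℝ)/2) * (u^(n+1)/2 * Real.exp (-u^2/4)) *
        (f (Real.sqrt τ * u) / (Real.sqrt τ * u)^n)) atTop
      (nhds (∫ u in Set.Ioi (0:ℝ),
        (4*π) ^ (-(n:ℝ)/2) * (u^(n+1)/2 * Real.exp (-u^2/4)) * L)) := by
    have hn1 : (-1:ℝ) < (n:ℝ)+1 := by have := Nat.cast_nonneg (α := ℝ) n; linarith
    have hbnd_int : IntegrableOn (fun u : ℝ =>
        (4*π) ^ (-(n:ℝ)/2) * (u^(n+1)/2 * Real.exp (-u^2/4)) * L) (Set.Ioi 0) := by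
      have h0 := (integrableOn_rpow_mul_exp_neg_mul_sq (by norm_num : (0:ℝ) < 1/4) hn1).const_mul
        ((4*π) ^ (-(n:ℝ)/2) * L / 2)
      refine h0.congr (Filter.Eventually.of_forall fun u => ?_)
      show (4*π) ^ (-(n:ℝ)/2) * L / 2 * (u ^ ((n:ℝ)+1) * Real.exp (-(1/4) * u^2)) = _
      have hr : u ^ ((n:ℝ)+1) = u^(n+1) := by
        rw [← Real.rpow_natCast u (n+1)]; push_cast; ring_nf
      rw [hr, show -(1/4 : ℝ)*u^2 = -u^2/4 from by ring]
      ring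
    refine tendsto_integral_filter_of_dominated_convergence
      (fun u => (4*π) ^ (-(n:ℝ)/2) * (u^(n+1)/2 * Real.exp (-u^2/4)) * L) ?_ ?_ hbnd_int ?_
    · filter_upwards [eventually_ge_atTop (1:ℝ)] with τ hτ1
      have hτ : (0:ℝ) < τ := lt_of_lt_of_le one_pos hτ1
      have ht : 0 < Real.sqrt τ := Real.sqrt_pos.mpr hτ
      have hcont : ContinuousOn (fun u : ℝ =>
          (4*π) ^ (-(n:ℝ)/2) * (u^(n+1)/2 * Real.exp (-u^2/4)) *
            (f (Real.sqrt τ * u) / (Real.sqrt τ * u)^n)) (Set.Ioi 0) := by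
        refine ContinuousOn.mul ?_ (ContinuousOn.div ?_ ?_ ?_)
        · exact (continuous_const.mul (((continuous_pow (n+1)).div_const 2).mul
            (Real.continuous_exp.comp ((continuous_pow 2).neg.div_const 4)))).continuousOn
        · exact hf_contOn.comp ((continuous_const.mul continuous_id).continuousOn)
            (fun u hu => mul_pos ht hu)
        · exact ((continuous_const.mul continuous_id).pow n).continuousOn
        · intro u hu
          exact pow_ne_zero _ (mul_pos ht hu).ne'
      exact hcont.aestronglyMeasurable measurableSet_Ioi
    · filter_upwards [eventually_ge_atTop (1:ℝ)] with τ hτ1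
      filter_upwards [ae_restrict_mem measurableSet_Ioi] with u hu
      have hτ : (0:ℝ) < τ := lt_of_lt_of_le one_pos hτ1
      have ht : 0 < Real.sqrt τ := Real.sqrt_pos.mpr hτ
      have hu0 : 0 < u := hu
      have htu : 0 < Real.sqrt τ * u := mul_pos ht hu0
      have hg1 : f (Real.sqrt τ * u) / (Real.sqrt τ * u)^n ≤ L := hgL _ htu
      have hg0 : 0 ≤ f (Real.sqrt τ * u) / (Real.sqrt τ * u)^n :=
        div_nonneg (hf0 _ htu.le) (pow_nonneg htu.le n)
      have hC : 0 ≤ (4*π) ^ (-(n:ℝ)/2) * (u^(n+1)/2 * Real.exp (-u^2/4)) := by positivity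
      rw [Real.norm_eq_abs, abs_of_nonneg (mul_nonneg hC hg0)]
      exact mul_le_mul_of_nonneg_left hg1 hC
    · filter_upwards [ae_restrict_mem measurableSet_Ioi] with u hu
      have hu0 : 0 < u := hu
      have hsq : Tendsto (fun τ : ℝ => Real.sqrt τ * u) atTop atTop := by
        refine Tendsto.atTop_mul_const hu0 ?_
        refine tendsto_atTop_atTop.mpr fun b => ⟨(max b 0)^2, fun a ha => ?_⟩
        refine le_trans (le_max_left b 0) ?_
        rw [← Real.sqrt_sq (le_max_right b 0)]
        exact Real.sqrt_le_sqrt ha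
      exact (hL.comp hsq).const_mul _
  -- value of the limit integral
  have hval : (∫ u in Set.Ioi (0:ℝ),
      (4*π) ^ (-(n:ℝ)/2) * (u^(n+1)/2 * Real.exp (-u^2/4)) * L)
      = L / (π ^ ((n:ℝ)/2) / Real.Gamma ((n:ℝ)/2 + 1)) := by
    have hn1 : (-1:ℝ) < (n:ℝ)+1 := by have := Nat.cast_nonneg (α := ℝ) n; linarith
    have hgam := integral_rpow_mul_exp_neg_mul_rpow (p := 2) (q := (n:ℝ)+1) (b := 1/4)
      two_pos hn1 (by norm_num)
    have hstep : (∫ u in Set.Ioi (0:ℝ),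
        (4*π) ^ (-(n:ℝ)/2) * (u^(n+1)/2 * Real.exp (-u^2/4)) * L)
        = ((4*π) ^ (-(n:ℝ)/2) * L / 2) *
          ∫ u in Set.Ioi (0:ℝ), u ^ ((n:ℝ)+1) * Real.exp (-(1/4) * u ^ (2:ℝ)) := by
      rw [← MeasureTheory.integral_const_mul]
      refine setIntegral_congr_fun measurableSet_Ioi fun u hu => ?_
      have hr : u ^ ((n:ℝ)+1) = u^(n+1) := by
        rw [← Real.rpow_natCast u (n+1)]; push_cast; ring_nf
      have hr2 : u ^ ((2:ℕ):ℝ) = u^2 := Real.rpow_natCast u 2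
      rw [show (2:ℝ) = ((2:ℕ):ℝ) from by norm_num, hr2, hr,
        show -(1/4 : ℝ)*u^2 = -u^2/4 from by ring]
      ring
    rw [hstep, hgam]
    have e1 : ((1:ℝ)/4) ^ (-((n:ℝ)+1+1)/2) = (4:ℝ) ^ (((n:ℝ)+2)/2) := by
      rw [one_div, Real.inv_rpow (by norm_num : (0:ℝ) ≤ 4), ← Real.rpow_neg (by norm_num)]
      congr 1
      ring
    have e2 : (4:ℝ) ^ (-(n:ℝ)/2) * (4:ℝ) ^ (((n:ℝ)+2)/2) = 4 := by
      rw [← Real.rpow_add (by norm_num : (0:ℝ) < 4),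
        show -(n:ℝ)/2 + ((n:ℝ)+2)/2 = 1 from by ring, Real.rpow_one]
    have e3 : (4*π : ℝ) ^ (-(n:ℝ)/2) = (4:ℝ) ^ (-(n:ℝ)/2) * π ^ (-(n:ℝ)/2) :=
      Real.mul_rpow (by norm_num) hπ.le
    have e4 : (π : ℝ) ^ (-(n:ℝ)/2) = (π ^ ((n:ℝ)/2))⁻¹ := by
      rw [neg_div, Real.rpow_neg hπ.le]
    have eΓ : ((n:ℝ)+1+1)/2 = (n:ℝ)/2 + 1 := by ring
    rw [e1, e3, e4, eΓ, div_div_eq_mul_div]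
    linear_combination (L * Real.Gamma ((n:ℝ)/2 + 1) * (π ^ ((n:ℝ)/2))⁻¹ / 4) * e2
  rw [← hval]
  refine Tendsto.congr' ?_ hDCT
  filter_upwards [eventually_ge_atTop (1:ℝ)] with τ hτ1
  exact (hHψ τ hτ1).symm
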